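/- Let E : M_n(ℂ) → M_n(ℂ) be a trace-preserving completely positive map with Kraus operators E_1,…,E_k, let 𝔄 ⊆ M_n(ℂ) be a *-subalgebra with unit 1_𝔄, and let π : 𝔄 → M_n(ℂ) be a faithful representation. Then MD_π(E) = { a ∈ 𝔄 : π(a)E_i 1_𝔄 = E_i a and 1_𝔄 E_i* π(a) = a E_i* for all i = 1,…,k }. -/
import Mathlib


open Matrix

lemma sum_mul_conjTranspose_self_eq_zero' {n k : ℕ}
    {X : Fin k → Matrix (Fin n) (Fin n) ℂ}
    (h : ∑ i, X i * (X i)ᴴ = 0) : ∀ i, X i = 0 := by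
  have htr : ∑ i, ∑ p, ∑ q, Complex.normSq (X i p q) = 0 := by
    have h2 := congrArg Matrix.trace h
    rw [Matrix.trace_sum, Matrix.trace_zero] at h2
    have h3 : ∀ i, Matrix.trace (X i * (X i)ᴴ)
        = ((∑ p, ∑ q, Complex.normSq (X i p q) : ℝ) : ℂ) := by
      intro i
      simp [Matrix.trace, Matrix.diag, Matrix.mul_apply, Matrix.conjTranspose_apply,
        Complex.mul_conj]
    rw [Finset.sum_congr rfl (fun i _ => h3 i)] at h2
    exact_mod_cast h2
  intro i
  have h4 : ∀ j ∈ Finset.univ, (0:ℝ) ≤ ∑ p, ∑ q, Complex.normSq (X j p q) :=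
    fun j _ => Finset.sum_nonneg fun p _ => Finset.sum_nonneg fun q _ =>
      Complex.normSq_nonneg _
  have h5 := (Finset.sum_eq_zero_iff_of_nonneg h4).mp htr i (Finset.mem_univ i)
  ext p q
  have h6 : ∀ p ∈ Finset.univ, (0:ℝ) ≤ ∑ q, Complex.normSq (X i p q) :=
    fun p _ => Finset.sum_nonneg fun q _ => Complex.normSq_nonneg _
  have h7 := (Finset.sum_eq_zero_iff_of_nonneg h6).mp h5 p (Finset.mem_univ p)
  have h8 := (Finset.sum_eq_zero_iff_of_nonneg
    (fun q _ => Complex.normSq_nonneg (X i p q))).mp h7 q (Finset.mem_univ q)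
  simpa using Complex.normSq_eq_zero.mp h8

/-- For a trace-preserving completely positive map `E` on `Mₙ(ℂ)`
with Kraus operators `E₁, …, E_k`, a unital *-subalgebra `𝔄` with unit
`e = 1_𝔄`, and a faithful representation `π` of `𝔄`, the generalized
multiplicative domain satisfies
`MD_π(E) = { a ∈ 𝔄 : π(a)Eᵢ1_𝔄 = Eᵢa and 1_𝔄Eᵢ*π(a) = aEᵢ* for all i }`. -/
theorem genMultDom_eq_kraus_characterization
    {n k : ℕ}
    (E : Fin k → Matrix (Fin n) (Fin n) ℂ)
    (φ : Matrix (Fin n) (Fin n) ℂ → Matrix (Fin n) (Fin n) ℂ)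
    (hφ : ∀ x, φ x = ∑ i, E i * x * (E i)ᴴ)
    (htp : ∑ i, (E i)ᴴ * E i = 1)
    (A : Set (Matrix (Fin n) (Fin n) ℂ))
    (hA0 : (0 : Matrix (Fin n) (Fin n) ℂ) ∈ A)
    (hAadd : ∀ a ∈ A, ∀ b ∈ A, a + b ∈ A)
    (hAsmul : ∀ (c : ℂ), ∀ a ∈ A, c • a ∈ A)
    (hAmul : ∀ a ∈ A, ∀ b ∈ A, a * b ∈ A)
    (hAstar : ∀ a ∈ A, aᴴ ∈ A)
    (e : Matrix (Fin n) (Fin n) ℂ)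
    (heA : e ∈ A)
    (hunit : ∀ a ∈ A, e * a = a ∧ a * e = a)
    (π : Matrix (Fin n) (Fin n) ℂ →ₗ[ℂ] Matrix (Fin n) (Fin n) ℂ)
    (hπmul : ∀ a ∈ A, ∀ b ∈ A, π (a * b) = π a * π b)
    (hπstar : ∀ a ∈ A, π aᴴ = (π a)ᴴ)
    (hπfaithful : Set.InjOn π A) :
    {a | a ∈ A ∧ ∀ b ∈ A,
        π a * φ b = φ (a * b) ∧ φ b * π a = φ (b * a)} =
      {a | a ∈ A ∧ ∀ i,
        π a * E i * e = E i * a ∧ e * (E i)ᴴ * π a = a * (E i)ᴴ} := by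
  -- the unit is Hermitian
  have he : eᴴ = e := by
    have h1 : e * eᴴ = eᴴ := (hunit eᴴ (hAstar e heA)).1
    have h2 := congrArg conjTranspose h1
    simp only [Matrix.conjTranspose_mul, Matrix.conjTranspose_conjTranspose] at h2
    rw [h1] at h2
    exact h2
  have hφstar : ∀ x, (φ x)ᴴ = φ xᴴ := by
    intro x
    simp [hφ, Matrix.conjTranspose_sum, Matrix.conjTranspose_mul, Matrix.mul_assoc]
  -- key lemma: first Kraus relation for any element of the multiplicative domain
  have key : ∀ a, a ∈ A →
      (∀ b ∈ A, π a * φ b = φ (a * b) ∧ φ b * π a = φ (b * a)) →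
      ∀ i, π a * E i * e = E i * a := by
    intro a haA hmd
    have hstar : ∀ c ∈ A, φ c * (π a)ᴴ = φ (c * aᴴ) := by
      intro c hc
      have h1 := (hmd cᴴ (hAstar c hc)).1
      have h2 := congrArg conjTranspose h1
      simpa [Matrix.conjTranspose_mul, hφstar] using h2
    have hee' : ∀ x : Matrix (Fin n) (Fin n) ℂ, e * (e * x) = e * x :=
      fun x => by rw [← Matrix.mul_assoc, (hunit e heA).1]
    have hea' : ∀ x : Matrix (Fin n) (Fin n) ℂ, e * (aᴴ * x) = aᴴ * x :=
      fun x => by rw [← Matrix.mul_assoc, (hunit aᴴ (hAstar a haA)).1]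
    have hae' : ∀ x : Matrix (Fin n) (Fin n) ℂ, a * (e * x) = a * x :=
      fun x => by rw [← Matrix.mul_assoc, (hunit a haA).2]
    have hae : a * e = a := (hunit a haA).2
    have s1 : ∀ i, (π a * E i * e) * (π a * E i * e)ᴴ
        = π a * (E i * e * (E i)ᴴ) * (π a)ᴴ := fun i => by
      simp only [Matrix.conjTranspose_mul, he, Matrix.mul_assoc, hee']
    have s2 : ∀ i, (π a * E i * e) * (E i * a)ᴴ
        = π a * (E i * aᴴ * (E i)ᴴ) := fun i => by
      simp only [Matrix.conjTranspose_mul, he, Matrix.mul_assoc, hea']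
    have s3 : ∀ i, (E i * a) * (π a * E i * e)ᴴ
        = E i * a * (E i)ᴴ * (π a)ᴴ := fun i => by
      simp only [Matrix.conjTranspose_mul, he, Matrix.mul_assoc, hae']
    have s4 : ∀ i, (E i * a) * (E i * a)ᴴ
        = E i * (a * aᴴ) * (E i)ᴴ := fun i => by
      simp only [Matrix.conjTranspose_mul, Matrix.mul_assoc]
    have expand : ∀ i, (π a * E i * e - E i * a) * (π a * E i * e - E i * a)ᴴ
        = π a * (E i * e * (E i)ᴴ) * (π a)ᴴ - π a * (E i * aᴴ * (E i)ᴴ)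
          - E i * a * (E i)ᴴ * (π a)ᴴ + E i * (a * aᴴ) * (E i)ᴴ := by
      intro i
      rw [Matrix.conjTranspose_sub, sub_mul, mul_sub, mul_sub,
        s1 i, s2 i, s3 i, s4 i]
      abel
    have hsum : ∑ i, (π a * E i * e - E i * a) * (π a * E i * e - E i * a)ᴴ = 0 := by
      rw [Finset.sum_congr rfl (fun i _ => expand i)]
      rw [Finset.sum_add_distrib, Finset.sum_sub_distrib, Finset.sum_sub_distrib]
      have T1 : ∑ i, π a * (E i * e * (E i)ᴴ) * (π a)ᴴ = φ (a * aᴴ) := by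
        calc ∑ i, π a * (E i * e * (E i)ᴴ) * (π a)ᴴ
            = π a * (∑ i, E i * e * (E i)ᴴ) * (π a)ᴴ := by
              rw [Finset.mul_sum, Finset.sum_mul]
          _ = π a * φ e * (π a)ᴴ := by rw [← hφ]
          _ = φ (a * e) * (π a)ᴴ := by rw [(hmd e heA).1]
          _ = φ a * (π a)ᴴ := by rw [hae]
          _ = φ (a * aᴴ) := hstar a haA
      have T2 : ∑ i, π a * (E i * aᴴ * (E i)ᴴ) = φ (a * aᴴ) := by
        rw [← Finset.mul_sum, ← hφ, (hmd aᴴ (hAstar a haA)).1]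
      have T3 : ∑ i, E i * a * (E i)ᴴ * (π a)ᴴ = φ (a * aᴴ) := by
        rw [← Finset.sum_mul, ← hφ, hstar a haA]
      have T4 : ∑ i, E i * (a * aᴴ) * (E i)ᴴ = φ (a * aᴴ) := (hφ _).symm
      rw [T1, T2, T3, T4]
      abel
    intro i
    exact sub_eq_zero.mp (sum_mul_conjTranspose_self_eq_zero' hsum i)
  ext a
  simp only [Set.mem_setOf_eq]
  constructor
  · rintro ⟨haA, hmd⟩
    refine ⟨haA, fun i => ⟨key a haA hmd i, ?_⟩⟩
    have hmd' : ∀ b ∈ A, π aᴴ * φ b = φ (aᴴ * b) ∧ φ b * π aᴴ = φ (b * aᴴ) := by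
      intro b hb
      constructor
      · have h1 := (hmd bᴴ (hAstar b hb)).2
        have h2 := congrArg conjTranspose h1
        simpa [Matrix.conjTranspose_mul, hφstar, hπstar a haA] using h2
      · have h1 := (hmd bᴴ (hAstar b hb)).1
        have h2 := congrArg conjTranspose h1
        simpa [Matrix.conjTranspose_mul, hφstar, hπstar a haA] using h2
    have h := key aᴴ (hAstar a haA) hmd' i
    have h2 := congrArg conjTranspose h
    simpa [Matrix.conjTranspose_mul, he, hπstar a haA, Matrix.mul_assoc] using h2
  · rintro ⟨haA, hk⟩
    have hk1' : ∀ i (x : Matrix (Fin n) (Fin n) ℂ),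
        π a * (E i * (e * x)) = E i * (a * x) := by
      intro i x
      calc π a * (E i * (e * x)) = π a * E i * e * x := by
            simp only [Matrix.mul_assoc]
        _ = E i * a * x := by rw [(hk i).1]
        _ = E i * (a * x) := by simp only [Matrix.mul_assoc]
    have hk2' : ∀ i, e * ((E i)ᴴ * π a) = a * (E i)ᴴ := by
      intro i
      have h1 := (hk i).2
      rwa [Matrix.mul_assoc] at h1
    refine ⟨haA, fun b hb => ⟨?_, ?_⟩⟩
    · rw [hφ b, hφ (a * b), Finset.mul_sum]
      refine Finset.sum_congr rfl fun i _ => ?_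
      have hb1 : π a * (E i * b * (E i)ᴴ) = π a * (E i * (e * b) * (E i)ᴴ) := by
        rw [(hunit b hb).1]
      rw [hb1]
      simp only [Matrix.mul_assoc]
      rw [hk1' i]
    · rw [hφ b, hφ (b * a), Finset.sum_mul]
      refine Finset.sum_congr rfl fun i _ => ?_
      have hb2 : E i * b * (E i)ᴴ * π a = E i * (b * e) * (E i)ᴴ * π a := by
        rw [(hunit b hb).2]
      rw [hb2]
      simp only [Matrix.mul_assoc]
      rw [hk2' i]
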